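/- The truncation of a laminar matroid of positive rank is laminar. -/

import Mathlib

/-!
Let `M'` keep the independent sets of `M` with at most `k` elements. A circuit of `M'` with more
than `k` elements contains an independent set of size `k`, which is a base of `M'`, so the circuit
spans `M'` and its closure contains every other closure. A circuit of `M'` with at most `k`
elements is a circuit of `M`, and its closure is the same in both matroids: it is the closure of
an independent set with fewer than `k` elements, and adding one element to such a set never
crosses the cutoff. So two intersecting circuits of `M'` either include a spanning one or are
intersecting circuits of `M` with unchanged closures, and laminarity of `M` applies.
-/

open Set

variable {α : Type*}

/-- A circuit: a minimal dependent set. -/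
def Matroid.IsCircuit' (M : Matroid α) (C : Set α) : Prop :=
  M.Dep C ∧ ∀ D, D ⊂ C → M.Indep D

/-- The circuit characterization of laminar matroids. -/
def Matroid.IsLaminar (M : Matroid α) : Prop :=
  ∀ C₁ C₂, M.IsCircuit' C₁ → M.IsCircuit' C₂ → (C₁ ∩ C₂).Nonempty →
    M.closure C₁ ⊆ M.closure C₂ ∨ M.closure C₂ ⊆ M.closure C₁

/-- A laminar family: any two intersecting members are comparable. -/
def IsLaminarFamily (𝒜 : Set (Set α)) : Prop :=
  ∀ A ∈ 𝒜, ∀ B ∈ 𝒜, (A ∩ B).Nonempty → A ⊆ B ∨ B ⊆ A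

/-- `M` is presented by the laminar family `𝒜` with capacities `c`. -/
def Matroid.IsLaminarPresBy (M : Matroid α) (E : Set α) (𝒜 : Set (Set α)) (c : Set α → ℕ) :
    Prop :=
  M.E = E ∧ ∀ I, M.Indep I ↔ I ⊆ E ∧ ∀ A ∈ 𝒜, (I ∩ A).ncard ≤ c A

/-- `M` has some laminar presentation (on its own ground set); this captures being
isomorphic to a laminar matroid `M(E, 𝒜, c)`. -/
def Matroid.HasLaminarPres (M : Matroid α) : Prop :=
  ∃ (𝒜 : Set (Set α)) (c : Set α → ℕ), IsLaminarFamily 𝒜 ∧ (∀ A ∈ 𝒜, A ⊆ M.E) ∧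
    M.IsLaminarPresBy M.E 𝒜 c

namespace Matroid

variable {M M' : Matroid α} {k : ℕ} {I X C : Set α}

lemma isCircuit'_iff : M.IsCircuit' C ↔ M.IsCircuit C := by
  rw [isCircuit_iff_forall_ssubset]
  rfl

lemma Indep.isBase_of_le_ncard (hfin : M'.E.Finite) (hk : ∀ J, M'.Indep J → J.ncard ≤ k)
    (hI : M'.Indep I) (hkI : k ≤ I.ncard) : M'.IsBase I := by
  rw [isBase_iff_maximal_indep]
  exact ⟨hI, fun J hJ hIJ ↦
    (eq_of_subset_of_ncard_le hIJ ((hk J hJ).trans hkI) (hfin.subset hJ.subset_ground)).ge⟩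

lemma IsCircuit.closure_eq_ground_of_lt_ncard (hfin : M'.E.Finite)
    (hk : ∀ J, M'.Indep J → J.ncard ≤ k) (hC : M'.IsCircuit C) (hkC : k < C.ncard) :
    M'.closure C = M'.E := by
  obtain ⟨x, hx⟩ := hC.nonempty
  refine ((hC.sdiff_singleton_indep hx).isBase_of_le_ncard hfin hk ?_).closure_of_superset
    sdiff_subset
  rw [ncard_sdiff_singleton_of_mem hx]
  omega

lemma dep_iff_of_ncard_le (hE : M'.E = M.E)
    (hI : ∀ I, M'.Indep I ↔ M.Indep I ∧ I.ncard ≤ k) (hX : X.ncard ≤ k) : M'.Dep X ↔ M.Dep X := by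
  rw [Dep, Dep, hI, hE, and_iff_left hX]

lemma closure_eq_of_indep_of_ncard_lt (hE : M'.E = M.E)
    (hI : ∀ I, M'.Indep I ↔ M.Indep I ∧ I.ncard ≤ k) (hIM : M.Indep I) (hIk : I.ncard < k) :
    M'.closure I = M.closure I := by
  have hI' : M'.Indep I := (hI I).2 ⟨hIM, hIk.le⟩
  ext e
  rw [hI'.mem_closure_iff, hIM.mem_closure_iff,
    dep_iff_of_ncard_le hE hI ((ncard_insert_le e I).trans hIk)]

lemma IsCircuit.isCircuit_of_ncard_le (hE : M'.E = M.E)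
    (hI : ∀ I, M'.Indep I ↔ M.Indep I ∧ I.ncard ≤ k) (hC : M'.IsCircuit C) (hCk : C.ncard ≤ k) :
    M.IsCircuit C := by
  rw [isCircuit_iff_forall_ssubset] at hC ⊢
  exact ⟨(dep_iff_of_ncard_le hE hI hCk).1 hC.1, fun J hJ ↦ ((hI J).1 (hC.2 hJ)).1⟩

lemma IsCircuit.closure_eq_of_ncard_le (hE : M'.E = M.E)
    (hI : ∀ I, M'.Indep I ↔ M.Indep I ∧ I.ncard ≤ k) (hfin : M.E.Finite) (hC : M'.IsCircuit C)
    (hCk : C.ncard ≤ k) : M'.closure C = M.closure C := by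
  obtain ⟨x, hx⟩ := hC.nonempty
  have hCM : M.IsCircuit C := hC.isCircuit_of_ncard_le hE hI hCk
  have hlt : (C \ {x}).ncard < k :=
    (ncard_sdiff_singleton_lt_of_mem hx (hfin.subset hCM.subset_ground)).trans_le hCk
  rw [← hC.closure_sdiff_singleton_eq x, ← hCM.closure_sdiff_singleton_eq x,
    closure_eq_of_indep_of_ncard_lt hE hI (hCM.sdiff_singleton_indep hx) hlt]

lemma IsLaminar.of_indep_iff_indep_and_ncard_le (hE : M'.E = M.E)
    (hI : ∀ I, M'.Indep I ↔ M.Indep I ∧ I.ncard ≤ k) (hM : M.IsLaminar) (hfin : M.E.Finite) :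
    M'.IsLaminar := by
  have hfin' : M'.E.Finite := hE ▸ hfin
  have hk : ∀ J, M'.Indep J → J.ncard ≤ k := fun J hJ ↦ ((hI J).1 hJ).2
  intro C₁ C₂ hC₁ hC₂ hne
  rw [isCircuit'_iff] at hC₁ hC₂
  obtain hk₁ | hk₁ := lt_or_ge k C₁.ncard
  · rw [hC₁.closure_eq_ground_of_lt_ncard hfin' hk hk₁]
    exact Or.inr (M'.closure_subset_ground C₂)
  obtain hk₂ | hk₂ := lt_or_ge k C₂.ncard
  · rw [hC₂.closure_eq_ground_of_lt_ncard hfin' hk hk₂]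
    exact Or.inl (M'.closure_subset_ground C₁)
  rw [hC₁.closure_eq_of_ncard_le hE hI hfin hk₁, hC₂.closure_eq_of_ncard_le hE hI hfin hk₂]
  exact hM C₁ C₂ (isCircuit'_iff.2 (hC₁.isCircuit_of_ncard_le hE hI hk₁))
    (isCircuit'_iff.2 (hC₂.isCircuit_of_ncard_le hE hI hk₂)) hne

end Matroid

theorem stmt_13_general (M : Matroid α) (hfin : M.E.Finite) (hM : M.IsLaminar)
    (B : Set α)
    (M' : Matroid α) (hE : M'.E = M.E)
    (hI : ∀ I, M'.Indep I ↔ M.Indep I ∧ I.ncard ≤ B.ncard - 1) :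
    M'.IsLaminar :=
  hM.of_indep_iff_indep_and_ncard_le hE hI hfin

theorem stmt_13 (M : Matroid α) (hfin : M.E.Finite) (hM : M.IsLaminar)
    (B : Set α) (hB : M.IsBase B) (hBne : B.Nonempty)
    (M' : Matroid α) (hE : M'.E = M.E)
    (hI : ∀ I, M'.Indep I ↔ M.Indep I ∧ I.ncard ≤ B.ncard - 1) :
    M'.IsLaminar :=
  stmt_13_general M hfin hM B M' hE hI
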